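/- arXiv:1502.03517 — 3 statements merged into one kernel-verified Lean document; each statement's English description precedes it below -/
import Mathlib

section
/- Let g : 2^C → ℝ be submodular with g(∅) = 0 and integer-valued, and suppose B(g) ∩ ℤ^C is nonempty. Then B(g) ∩ ℤ^C (the integer points of the base polyhedron) satisfies the M-convex exchange axiom: for all integer x, y ∈ B(g) and u with x_u > y_u, there exists v with x_v < y_v such that x − e_u + e_v ∈ B(g) ∩ ℤ^C. -/
/-!
Fix `x` in the base polyhedron and call `S` tight when `x(S) = g(S)`. Submodularity makes tight
sets closed under union, and `∅` is tight, so there is a largest tight set `A` avoiding `u`.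
For `v ∉ A`, no tight set contains `v` but not `u`, so `x - e_u + e_v` violates no constraint.
Such a `v` with `x_v < y_v` exists because `y(A) ≤ g(A) = x(A)` and `y(C) = x(C)` force
`y(C \ A) ≥ x(C \ A)`, while `y_u < x_u` with `u ∉ A`.
-/

open Finset

/-- An integer point of the base polyhedron of an integer-valued submodular
function. -/
def memBaseInt {C : Type*} [Fintype C] [DecidableEq C]
    (g : Finset C → ℤ) (x : C → ℤ) : Prop :=
  (∀ S : Finset C, ∑ j ∈ S, x j ≤ g S) ∧ ∑ j, x j = g Finset.univ

lemma exists_notMem_lt_of_sum_le_of_sum_eq {ι M : Type*} [Fintype ι] [DecidableEq ι]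
    [AddCommMonoid M] [LinearOrder M] [IsOrderedCancelAddMonoid M]
    {x y : ι → M} {A : Finset ι} {u : ι} (hA : ∑ j ∈ A, y j ≤ ∑ j ∈ A, x j)
    (htot : ∑ j, x j = ∑ j, y j) (huA : u ∉ A) (hu : y u < x u) :
    ∃ v ∉ A, x v < y v := by
  by_contra! h
  have hcompl : ∑ j ∈ Aᶜ, y j < ∑ j ∈ Aᶜ, x j :=
    sum_lt_sum (fun j hj => h j (mem_compl.mp hj)) ⟨u, mem_compl.mpr huA, hu⟩
  rw [← sum_add_sum_compl A x, ← sum_add_sum_compl A y] at htot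
  exact (add_lt_add_of_le_of_lt hA hcompl).ne' htot

lemma sum_sub_single_add_single {ι M : Type*} [DecidableEq ι] [AddCommGroup M] [One M]
    (x : ι → M) (S : Finset ι) (u v : ι) :
    ∑ j ∈ S, (x - Pi.single u 1 + Pi.single v 1 : ι → M) j =
      ∑ j ∈ S, x j - (if u ∈ S then 1 else 0) + (if v ∈ S then 1 else 0) := by
  simp only [Pi.add_apply, Pi.sub_apply]
  rw [sum_add_distrib, sum_sub_distrib, sum_pi_single', sum_pi_single']

section Tight

variable {C : Type*} [DecidableEq C] (g : Finset C → ℤ) (x : C → ℤ)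

def IsTight (S : Finset C) : Prop := ∑ j ∈ S, x j = g S

variable {g x}

lemma IsTight.union (hsub : ∀ X Y : Finset C, g (X ∪ Y) + g (X ∩ Y) ≤ g X + g Y)
    (hfeas : ∀ S : Finset C, ∑ j ∈ S, x j ≤ g S) {S T : Finset C}
    (hS : IsTight g x S) (hT : IsTight g x T) : IsTight g x (S ∪ T) := by
  unfold IsTight at *
  have hmod := sum_union_inter (s₁ := S) (s₂ := T) (f := x)
  linarith [hfeas (S ∪ T), hfeas (S ∩ T), hsub S T]

lemma exists_isGreatest_isTight_notMem [Fintype C]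
    (hsub : ∀ X Y : Finset C, g (X ∪ Y) + g (X ∩ Y) ≤ g X + g Y) (hzero : g ∅ = 0)
    (hfeas : ∀ S : Finset C, ∑ j ∈ S, x j ≤ g S) (u : C) :
    ∃ A, IsGreatest {S | u ∉ S ∧ IsTight g x S} A := by
  classical
  let P S := u ∉ S ∧ IsTight g x S
  have hempty : P ∅ := ⟨notMem_empty u, by simp [IsTight, hzero]⟩
  have hunion : ∀ S, P S → ∀ T, P T → P (S ∪ T) := fun S hS T hT =>
    ⟨by simp [hS.1, hT.1], hS.2.union hsub hfeas hT.2⟩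
  exact ⟨(univ.filter P).sup id, sup_induction hempty hunion fun S hS => (mem_filter.mp hS).2,
    fun S hS => le_sup (f := id) (mem_filter.mpr ⟨mem_univ S, hS⟩)⟩

lemma memBaseInt_sub_single_add_single [Fintype C] (hx : memBaseInt g x) {u v : C}
    (hv : ∀ S, v ∈ S → IsTight g x S → u ∈ S) :
    memBaseInt g (x - Pi.single u 1 + Pi.single v 1) := by
  refine ⟨fun S => ?_, ?_⟩
  · rw [sum_sub_single_add_single]
    have hxS := hx.1 S
    split_ifs with huS hvS hvS
    · omega
    · omega
    · have hslack : ∑ j ∈ S, x j ≠ g S := fun h => huS (hv S hvS h)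
      omega
    · omega
  · rw [sum_sub_single_add_single]
    simp [hx.2]

end Tight

theorem base_polyhedron_int_M_convex_general {C : Type*} [Fintype C] [DecidableEq C]
    (g : Finset C → ℤ)
    (hsub : ∀ X Y : Finset C, g (X ∪ Y) + g (X ∩ Y) ≤ g X + g Y)
    (hzero : g ∅ = 0)
    (x y : C → ℤ) (hx : memBaseInt g x) (hy : memBaseInt g y)
    (u : C) (hu : y u < x u) :
    ∃ v : C, x v < y v ∧ memBaseInt g (x - Pi.single u 1 + Pi.single v 1) := by
  obtain ⟨A, ⟨huA, hA⟩, hAmax⟩ := exists_isGreatest_isTight_notMem hsub hzero hx.1 u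
  have hyA : ∑ j ∈ A, y j ≤ ∑ j ∈ A, x j := hA ▸ hy.1 A
  obtain ⟨v, hvA, hxy⟩ :=
    exists_notMem_lt_of_sum_le_of_sum_eq hyA (hx.2.trans hy.2.symm) huA hu
  refine ⟨v, hxy, memBaseInt_sub_single_add_single hx fun S hvS hS => ?_⟩
  by_contra huS
  exact hvA (hAmax ⟨huS, hS⟩ hvS)

/-- The integer points of the base polyhedron of an integer-valued submodular
function satisfy the M-convex exchange axiom. -/
theorem base_polyhedron_int_M_convex {C : Type*} [Fintype C] [DecidableEq C]
    (g : Finset C → ℤ)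
    (hsub : ∀ X Y : Finset C, g (X ∪ Y) + g (X ∩ Y) ≤ g X + g Y)
    (hzero : g ∅ = 0)
    (hne : ∃ x : C → ℤ, memBaseInt g x)
    (x y : C → ℤ) (hx : memBaseInt g x) (hy : memBaseInt g y)
    (u : C) (hu : y u < x u) :
    ∃ v : C, x v < y v ∧ memBaseInt g (x - Pi.single u 1 + Pi.single v 1) :=
  base_polyhedron_int_M_convex_general g hsub hzero x y hx hy u hu
end

section
/- Every M-convex set B ⊆ ℤ^K is 'hole-free': B equals the set of integer points of its convex hull, i.e., B = conv(B) ∩ ℤ^K. -/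
/-!
Fix the coordinates of `x` one at a time. A slice `{z ∈ B | z j = k}` of an M-convex set is
M-convex, and the convex hull of the slice is the slice of the convex hull. For the latter, the
section of `conv B` by the hyperplane `y j = k` is spanned by the points of `B` on it and by the
points where segments `[s, t]` with `s j < k < t j`, `s, t ∈ B`, cross it. Such a crossing
point lies in the hull of the slice by induction on the ℓ¹-distance of `s` and `t`: the
symmetric exchange `t - e_j + e_v, s + e_j - e_v ∈ B` moves both ends one step towards the
hyperplane, and the old crossing point lies between the two new ones. Once every coordinate is
fixed, the slice can only be `{x}`, and it is nonempty because its hull contains `x`.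
-/

section LevelPoint

variable {𝕜 E : Type*} [Field 𝕜] [AddCommGroup E] [Module 𝕜 E] (f : E →ₗ[𝕜] 𝕜) (c : 𝕜)

/-- The point where the line through `a` and `b` crosses the hyperplane `f = c`; it is junk
(namely `0`) when `f a = f b`. -/
def levelPoint (a b : E) : E := (f b - f a)⁻¹ • ((f b - c) • a + (c - f a) • b)

variable {f c}

lemma levelPoint_comm (a b : E) : levelPoint f c a b = levelPoint f c b a := by
  have : (f a - f b)⁻¹ = -(f b - f a)⁻¹ := by rw [← inv_neg, neg_sub]
  unfold levelPoint
  rw [this]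
  match_scalars <;> ring

lemma levelPoint_neg (a b : E) : levelPoint (-f) (-c) a b = levelPoint f c a b := by
  have : (-f) b - (-f) a = -(f b - f a) := by simp only [LinearMap.neg_apply]; ring
  unfold levelPoint
  rw [this, inv_neg]
  match_scalars <;> simp only [LinearMap.neg_apply] <;> ring

lemma levelPoint_of_left {a b : E} (ha : f a = c) (hb : f b ≠ c) : levelPoint f c a b = a := by
  have : f b - c ≠ 0 := sub_ne_zero.2 hb
  simp [levelPoint, ha, smul_smul, this]

lemma levelPoint_of_right {a b : E} (hb : f b = c) (ha : f a ≠ c) : levelPoint f c a b = b := by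
  rw [levelPoint_comm, levelPoint_of_left hb ha]

variable [LinearOrder 𝕜] [IsStrictOrderedRing 𝕜]

lemma levelPoint_eq_of_mem_segment {a b x : E} (hab : f a < f b) (hx : x ∈ segment 𝕜 a b)
    (hfx : f x = c) : levelPoint f c a b = x := by
  obtain ⟨μ, ν, -, -, hμν, rfl⟩ := hx
  have hd : f b - f a ≠ 0 := sub_ne_zero.2 hab.ne'
  simp only [map_add, map_smul, smul_eq_mul] at hfx
  obtain rfl : μ = 1 - ν := by linear_combination hμν
  unfold levelPoint
  rw [← hfx]
  match_scalars <;> field_simp <;> ring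

/-- The crossing point of the diagonal `[s, t]` of the parallelogram `s t' t s'` lies between
the crossing points of the sides `[s, t']` and `[s', t]`. -/
lemma levelPoint_mem_segment {s t s' t' : E} (hst : s + t = s' + t')
    (hf : f s' - f s = f t - f t') (hs : f s < c) (ht : c < f t) (hs't : f s' < f t) :
    levelPoint f c s t ∈ segment 𝕜 (levelPoint f c s t') (levelPoint f c s' t) := by
  obtain rfl : t' = s + t - s' := by rw [hst]; abel
  have hft' : f (s + t - s') = f s + f t - f s' := by simp
  have h1 : f t - f s ≠ 0 := by linarith
  have h2 : f s + f t - f s' - f s ≠ 0 := by linarith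
  have h3 : f t - f s' ≠ 0 := by linarith
  refine ⟨(f t - c) / (f t - f s), (c - f s) / (f t - f s), by bound, by bound, ?_, ?_⟩
  · field_simp; ring
  · unfold levelPoint
    rw [hft']
    simp only [smul_sub, smul_add]
    match_scalars <;> (field_simp; ring)

/-- For fixed `b`, the crossing point from a convex combination of `a₁, a₂` is a convex
combination of the crossing points from `a₁` and `a₂`, with weights proportional to
`f b - f aᵢ`. -/
lemma convex_setOf_levelPoint_mem_left {T : Set E} (hT : Convex 𝕜 T) {b : E} (hb : c < f b) :
    Convex 𝕜 {a | f a ≤ c ∧ levelPoint f c a b ∈ T} := by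
  rintro a₁ ⟨ha₁, hg₁⟩ a₂ ⟨ha₂, hg₂⟩ μ ν hμ hν hμν
  obtain rfl : μ = 1 - ν := by linear_combination hμν
  have hd₁ : 0 < f b - f a₁ := by linarith
  have hd₂ : 0 < f b - f a₂ := by linarith
  have hfa : f ((1 - ν) • a₁ + ν • a₂) = (1 - ν) * f a₁ + ν * f a₂ := by simp
  have hd : f b - f ((1 - ν) • a₁ + ν • a₂) = (1 - ν) * (f b - f a₁) + ν * (f b - f a₂) := by
    rw [hfa]; ring
  set d := (1 - ν) * (f b - f a₁) + ν * (f b - f a₂) with hd_def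
  have hd0 : 0 < d := by nlinarith
  refine ⟨by rw [hfa]; nlinarith, ?_⟩
  have hcombo : levelPoint f c ((1 - ν) • a₁ + ν • a₂) b =
      ((1 - ν) * (f b - f a₁) / d) • levelPoint f c a₁ b +
      (ν * (f b - f a₂) / d) • levelPoint f c a₂ b := by
    unfold levelPoint
    rw [hd, hfa, hd_def]
    match_scalars <;> field_simp
    ring
  rw [hcombo]
  exact hT hg₁ hg₂ (by positivity) (by positivity) (by rw [← add_div, div_self hd0.ne'])

lemma convex_setOf_levelPoint_mem_right {T : Set E} (hT : Convex 𝕜 T) {a : E} (ha : f a < c) :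
    Convex 𝕜 {b | c ≤ f b ∧ levelPoint f c a b ∈ T} := by
  have := convex_setOf_levelPoint_mem_left (f := -f) (c := -c) hT (b := a) (by simpa using ha)
  simpa [levelPoint_neg, levelPoint_comm a] using this

lemma mem_convexHull_sep_eq_of_le {S : Set E} (hS : ∀ s ∈ S, f s ≤ c) {x : E}
    (hx : x ∈ convexHull 𝕜 S) (hfx : f x = c) : x ∈ convexHull 𝕜 {s ∈ S | f s = c} := by
  set C := convexHull 𝕜 {s ∈ S | f s = c}
  have hC : ∀ y ∈ C, f y = c :=
    convexHull_min (fun s hs => hs.2) (convex_hyperplane f.isLinear c)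
  have hU : Convex 𝕜 ({y | f y < c} ∪ C) := by
    rintro y (hy | hy) z (hz | hz) μ ν hμ hν hμν
    · exact .inl (convex_halfSpace_lt f.isLinear c hy hz hμ hν hμν)
    · rcases hμ.lt_or_eq with hμ | rfl
      · refine .inl (show f (μ • y + ν • z) < c from ?_)
        calc f (μ • y + ν • z) = μ * f y + ν * c := by simp [hC z hz]
          _ < μ * c + ν * c := by gcongr; exact hy
          _ = c := by rw [← add_mul, hμν, one_mul]
      · right; simpa [show ν = 1 by simpa using hμν] using hz
    · rcases hν.lt_or_eq with hν | rfl
      · refine .inl (show f (μ • y + ν • z) < c from ?_)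
        calc f (μ • y + ν • z) = μ * c + ν * f z := by simp [hC y hy]
          _ < μ * c + ν * c := by gcongr; exact hz
          _ = c := by rw [← add_mul, hμν, one_mul]
      · right; simpa [show μ = 1 by simpa using hμν] using hy
    · exact .inr (convex_convexHull 𝕜 _ hy hz hμ hν hμν)
  have hS' : S ⊆ {y | f y < c} ∪ C := fun s hs =>
    (hS s hs).lt_or_eq.imp id fun h => subset_convexHull 𝕜 _ ⟨hs, h⟩
  exact (convexHull_min hS' hU hx).resolve_left hfx.not_lt

theorem mem_of_mem_convexHull_of_levelPoint_mem {S T : Set E} (hT : Convex 𝕜 T)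
    (hS₀ : ∀ s ∈ S, f s = c → s ∈ T)
    (hST : ∀ s ∈ S, ∀ t ∈ S, f s < c → c < f t → levelPoint f c s t ∈ T)
    {x : E} (hx : x ∈ convexHull 𝕜 S) (hfx : f x = c) : x ∈ T := by
  set Sle := {s ∈ S | f s ≤ c}
  set Sgt := {s ∈ S | c < f s}
  have hS : S = Sle ∪ Sgt := by
    ext s; simp [Sle, Sgt, ← and_or_left, le_or_gt]
  rcases Sgt.eq_empty_or_nonempty with hgt | hgt
  · have hle : ∀ s ∈ S, f s ≤ c := fun s hs => not_lt.1 fun h => hgt.subset ⟨hs, h⟩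
    exact convexHull_min (fun s hs => hS₀ s hs.1 hs.2) hT
      (mem_convexHull_sep_eq_of_le hle hx hfx)
  rcases Sle.eq_empty_or_nonempty with hle | hle
  · rw [hS, hle, Set.empty_union] at hx
    exact absurd hfx (convexHull_min (fun s hs => hs.2) (convex_halfSpace_gt f.isLinear c) hx).ne'
  rw [hS, convexHull_union hle hgt, mem_convexJoin] at hx
  obtain ⟨a, ha, b, hb, hxab⟩ := hx
  have hfa : f a ≤ c := convexHull_min (fun s hs => hs.2) (convex_halfSpace_le f.isLinear c) ha
  have hfb : c < f b := convexHull_min (fun s hs => hs.2) (convex_halfSpace_gt f.isLinear c) hb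
  -- `x` is the crossing point of `[a, b]`, and crossing points stay in `T` under convex
  -- combinations of either endpoint.
  have hab : a ∈ {a | f a ≤ c ∧ levelPoint f c a b ∈ T} := by
    refine convexHull_min ?_ (convex_setOf_levelPoint_mem_left hT hfb) ha
    rintro s ⟨hsS, hsc⟩
    refine ⟨hsc, ?_⟩
    rcases hsc.lt_or_eq with hsc | hsc
    · have hSgt : Sgt ⊆ {t | c ≤ f t ∧ levelPoint f c s t ∈ T} :=
        fun t ht => ⟨ht.2.le, hST s hsS t ht.1 hsc ht.2⟩
      exact (convexHull_min hSgt (convex_setOf_levelPoint_mem_right hT hsc) hb).2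
    · rw [levelPoint_of_left hsc hfb.ne']
      exact hS₀ s hsS hsc
  rw [← levelPoint_eq_of_mem_segment (hfa.trans_lt hfb) hxab hfx]
  exact hab.2

end LevelPoint

variable {ι : Type*}

@[simps]
def toRealVec : (ι → ℤ) →+ (ι → ℝ) where
  toFun z j := z j
  map_zero' := by ext; simp
  map_add' x y := by ext; simp

section l1Dist

variable [Fintype ι]

def l1Dist (x y : ι → ℤ) : ℕ := ∑ j, (x j - y j).natAbs

lemma l1Dist_comm (x y : ι → ℤ) : l1Dist x y = l1Dist y x := by
  simp only [l1Dist, ← Int.natAbs_neg (x _ - y _), neg_sub]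

end l1Dist

variable [DecidableEq ι]

lemma sub_single_add_single_apply (x : ι → ℤ) (u v j : ι) :
    (x - Pi.single u 1 + Pi.single v 1 : ι → ℤ) j =
      x j - (if j = u then 1 else 0) + (if j = v then 1 else 0) := by
  simp [Pi.single_apply]

lemma l1Dist_sub_single_add_single_lt [Fintype ι] {x y : ι → ℤ} {u v : ι} (hu : y u < x u)
    (hv : x v < y v) : l1Dist (x - Pi.single u 1 + Pi.single v 1) y < l1Dist x y := by
  have huv : u ≠ v := by rintro rfl; omega
  refine Finset.sum_lt_sum (fun j _ => ?_) ⟨u, Finset.mem_univ u, ?_⟩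
  · rw [sub_single_add_single_apply]
    split_ifs <;> subst_vars <;> omega
  · rw [sub_single_add_single_apply, if_pos rfl, if_neg huv]
    omega

def MConvex (B : Set (ι → ℤ)) : Prop :=
  ∀ x ∈ B, ∀ y ∈ B, ∀ u, y u < x u →
    ∃ v, x v < y v ∧ x - Pi.single u 1 + Pi.single v 1 ∈ B

theorem MConvex.sep_eq {B : Set (ι → ℤ)} (hB : MConvex B) (j : ι) (k : ℤ) :
    MConvex {z ∈ B | z j = k} := by
  rintro x ⟨hx, hxj⟩ y ⟨hy, hyj⟩ u hu
  obtain ⟨v, hv, hxv⟩ := hB x hx y hy u hu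
  have hju : j ≠ u := by rintro rfl; omega
  have hjv : j ≠ v := by rintro rfl; omega
  exact ⟨v, hv, hxv, by rw [sub_single_add_single_apply, if_neg hju, if_neg hjv]; omega⟩

theorem MConvex.exists_exchange_symm [Fintype ι] {B : Set (ι → ℤ)} (hB : MConvex B)
    {x y : ι → ℤ} (hx : x ∈ B) (hy : y ∈ B) {u : ι} (hu : y u < x u) :
    ∃ v, x v < y v ∧ x - Pi.single u 1 + Pi.single v 1 ∈ B ∧
      y - Pi.single v 1 + Pi.single u 1 ∈ B := by
  -- Exchanging `y` towards `x` at `v` gives `s`. If `s ≠ u`, induction applies to the closer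
  -- point `y - e_v + e_s` and yields `w`; exchanging `y - e_v + e_s - e_w + e_u` towards `y`
  -- at `s` must then undo `v` or `w`.
  induction hd : l1Dist y x using Nat.strong_induction_on generalizing y with
  | _ n ih =>
  obtain ⟨v, hv, hxv⟩ := hB x hx y hy u hu
  obtain ⟨s, hs, hys⟩ := hB y hy x hx v hv
  by_cases hsu : s = u
  · exact ⟨v, hv, hxv, hsu ▸ hys⟩
  have huv : u ≠ v := by rintro rfl; omega
  have hsv : s ≠ v := by rintro rfl; omega
  have hy₁ := sub_single_add_single_apply y v s
  obtain ⟨w, hw, hxw, hPw⟩ := ih _ (hd ▸ l1Dist_sub_single_add_single_lt hv hs) hys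
    (by rw [hy₁, if_neg huv, if_neg (Ne.symm hsu)]; omega) rfl
  have hP := sub_single_add_single_apply (y - Pi.single v 1 + Pi.single s 1) w u
  have hws : w ≠ s := by rintro rfl; rw [hy₁, if_neg hsv, if_pos rfl] at hw; omega
  have hyw : x w < y w := by
    rw [hy₁, if_neg hws] at hw; split_ifs at hw <;> omega
  obtain ⟨t, ht, hPt⟩ := hB _ hPw y hy s
    (by rw [hP, hy₁, if_neg hws.symm, if_neg hsu, if_neg hsv, if_pos rfl]; omega)
  have htvw : t = v ∨ t = w := by
    by_contra! h
    rw [hP, hy₁, if_neg h.1, if_neg h.2] at ht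
    split_ifs at ht <;> omega
  rcases htvw with rfl | rfl
  · exact ⟨w, hyw, hxw, by convert hPt using 1; abel⟩
  · exact ⟨v, hv, hxv, by convert hPt using 1; abel⟩

theorem MConvex.levelPoint_mem_convexHull [Fintype ι] {B : Set (ι → ℤ)} (hB : MConvex B)
    (j : ι) (k : ℤ) {s t : ι → ℤ} (hs : s ∈ B) (ht : t ∈ B) (hsk : s j ≤ k) (hkt : k ≤ t j)
    (hst : s j < t j) :
    levelPoint (LinearMap.proj j) (k : ℝ) (toRealVec s) (toRealVec t) ∈
      convexHull ℝ (toRealVec '' {z ∈ B | z j = k}) := by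
  induction hd : l1Dist s t using Nat.strong_induction_on generalizing s t with
  | _ n ih =>
  rcases hsk.lt_or_eq with hsk | hsk
  swap
  · rw [levelPoint_of_left (by simp [hsk]) (by simpa [← hsk] using hst.ne')]
    exact subset_convexHull ℝ _ ⟨s, ⟨hs, hsk⟩, rfl⟩
  rcases hkt.lt_or_eq with hkt | hkt
  swap
  · rw [levelPoint_of_right (by simp [hkt]) (by simpa [hkt] using hst.ne)]
    exact subset_convexHull ℝ _ ⟨t, ⟨ht, hkt.symm⟩, rfl⟩
  obtain ⟨v, hv, ht', hs'⟩ := hB.exists_exchange_symm ht hs hst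
  have hvj : v ≠ j := by rintro rfl; omega
  have hs'j := sub_single_add_single_apply s v j j
  have ht'j := sub_single_add_single_apply t j v j
  rw [if_neg hvj.symm, if_pos rfl, sub_zero] at hs'j
  rw [if_neg hvj.symm, if_pos rfl, add_zero] at ht'j
  refine (convex_convexHull ℝ _).segment_subset
    (ih _ ?_ hs ht' hsk.le (by omega) (by omega) rfl)
    (ih _ ?_ hs' ht (by omega) hkt.le (by omega) rfl)
    (levelPoint_mem_segment ?_ ?_ ?_ ?_ ?_)
  · rw [← hd, l1Dist_comm, l1Dist_comm s]
    exact l1Dist_sub_single_add_single_lt hst hv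
  · exact hd ▸ l1Dist_sub_single_add_single_lt hv hst
  · rw [← map_add, ← map_add]; congr 1; abel
  · simp only [LinearMap.coe_proj, Function.eval, toRealVec_apply, hs'j, ht'j]
    push_cast; ring
  · simpa using hsk
  · simpa using hkt
  · simp only [LinearMap.coe_proj, Function.eval, toRealVec_apply, hs'j]
    exact_mod_cast (by omega : s j + 1 < t j)

theorem MConvex.mem_convexHull_sep_eq [Fintype ι] {B : Set (ι → ℤ)} (hB : MConvex B)
    {y : ι → ℝ} (hy : y ∈ convexHull ℝ (toRealVec '' B)) (j : ι) (k : ℤ) (hyj : y j = k) :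
    y ∈ convexHull ℝ (toRealVec '' {z ∈ B | z j = k}) := by
  refine mem_of_mem_convexHull_of_levelPoint_mem (f := LinearMap.proj j)
    (convex_convexHull ℝ _) ?_ ?_ hy hyj
  · rintro _ ⟨z, hz, rfl⟩ hzk
    exact subset_convexHull ℝ _ ⟨z, ⟨hz, by simpa using hzk⟩, rfl⟩
  · rintro _ ⟨s, hs, rfl⟩ _ ⟨t, ht, rfl⟩ hsk hkt
    have hsk : s j < k := by simpa using hsk
    have hkt : k < t j := by simpa using hkt
    exact hB.levelPoint_mem_convexHull j k hs ht hsk.le hkt.le (hsk.trans hkt)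

theorem MConvex.mem_of_toRealVec_mem_convexHull [Fintype ι] {B : Set (ι → ℤ)} (hB : MConvex B)
    {x : ι → ℤ} (hx : toRealVec x ∈ convexHull ℝ (toRealVec '' B)) : x ∈ B := by
  have hslice : ∀ J : Finset ι, ∃ B' ⊆ B, MConvex B' ∧ (∀ z ∈ B', ∀ j ∈ J, z j = x j) ∧
      toRealVec x ∈ convexHull ℝ (toRealVec '' B') := by
    intro J
    induction J using Finset.induction_on with
    | empty => exact ⟨B, subset_rfl, hB, by simp, hx⟩
    | insert j J _ ih =>
      obtain ⟨B', hB'B, hB', hfix, hxB'⟩ := ih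
      refine ⟨{z ∈ B' | z j = x j}, fun z hz => hB'B hz.1, hB'.sep_eq j (x j), ?_,
        hB'.mem_convexHull_sep_eq hxB' j (x j) (by simp)⟩
      rintro z ⟨hz, hzj⟩ i hi
      rcases Finset.mem_insert.1 hi with rfl | hi
      exacts [hzj, hfix z hz i hi]
  obtain ⟨B', hB'B, -, hfix, hxB'⟩ := hslice Finset.univ
  obtain ⟨_, z, hz, -⟩ := convexHull_nonempty_iff.1 ⟨_, hxB'⟩
  obtain rfl : z = x := funext fun j => hfix z hz j (Finset.mem_univ j)
  exact hB'B hz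

theorem M_convex_hole_free_general {K : ℕ}
    (B : Set (Fin K → ℤ))
    (hex : ∀ x ∈ B, ∀ y ∈ B, ∀ u : Fin K, y u < x u →
      ∃ v : Fin K, x v < y v ∧ x - Pi.single u 1 + Pi.single v 1 ∈ B) :
    ∀ x : Fin K → ℤ,
      x ∈ B ↔ (fun j => (x j : ℝ)) ∈
        convexHull ℝ ((fun (v : Fin K → ℤ) (j : Fin K) => (v j : ℝ)) '' B) :=
  fun x => ⟨fun hx => subset_convexHull ℝ _ ⟨x, hx, rfl⟩,
    fun hx => MConvex.mem_of_toRealVec_mem_convexHull (B := B) hex hx⟩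

/-- Every (finite nonempty) M-convex set is hole-free: it equals the set of
integer points of its convex hull. -/
theorem M_convex_hole_free {K : ℕ} (hK : 0 < K)
    (B : Set (Fin K → ℤ)) (hne : B.Nonempty) (hfin : B.Finite)
    (hex : ∀ x ∈ B, ∀ y ∈ B, ∀ u : Fin K, y u < x u →
      ∃ v : Fin K, x v < y v ∧ x - Pi.single u 1 + Pi.single v 1 ∈ B) :
    ∀ x : Fin K → ℤ,
      x ∈ B ↔ (fun j => (x j : ℝ)) ∈
        convexHull ℝ ((fun (v : Fin K → ℤ) (j : Fin K) => (v j : ℝ)) '' B) :=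
  M_convex_hole_free_general B hex
end

section
/- If x and y are both global minimizers of a separable discretely convex function f over an M-convex set B, then any point obtained from x by a single exchange toward y that stays in B is also a global minimizer: for all u with x_u > y_u there exists v with x_v < y_v such that x − e_u + e_v ∈ B and f(x − e_u + e_v) = f(x). -/
/-! Write `Δ_j t = f_j (t + 1) - f_j t`, nondecreasing in `t` by convexity. For `c` with
`y_c < x_c`, the exchange axiom at `x` gives `b` with `x_b < y_b` and `x - e_c + e_b ∈ B`, and
then at `y` gives `c'` with `y_c' < x_c'` and `y - e_b + e_c' ∈ B`. Minimality of `x` and `y`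
and convexity give
`Δ_c (x_c - 1) ≤ Δ_b (x_b) ≤ Δ_b (y_b - 1) ≤ Δ_c' (y_c') ≤ Δ_c' (x_c' - 1)`,
so `φ c = Δ_c (x_c - 1)` is nondecreasing along `c ↦ c'`. If `φ` does not increase at `u`, the
whole chain is tight and `x - e_u + e_b` is cost-neutral. Otherwise, iterating `c ↦ c'` on the
finite set reaches some `c` at which `φ` does not increase and `c' ≠ u` (as `φ c' > φ u`); then
`y - e_b + e_c'` is a minimizer strictly closer to `x` in `ℓ¹` that agrees with `y` at `u`,
and we conclude by induction on that distance. -/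

theorem Function.exists_apply_eq_of_le_apply {α β : Type*} [Finite α] [PartialOrder β]
    (σ : α → α) (φ : α → β) (hφ : ∀ a, φ a ≤ φ (σ a)) (a : α) :
    ∃ c, φ (σ c) = φ c ∧ φ (σ a) ≤ φ c := by
  have hmono : Monotone fun n => φ (σ^[n] (σ a)) := monotone_nat_of_le_succ fun n => by
    simpa only [Function.iterate_succ_apply'] using hφ _
  obtain ⟨i, j, hij, heq⟩ := Finite.exists_ne_map_eq_of_infinite fun n => σ^[n] (σ a)
  wlog hlt : i < j generalizing i j
  · exact this j i hij.symm heq.symm (by omega)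
  refine ⟨σ^[i] (σ a), le_antisymm ?_ (hφ _), hmono (Nat.zero_le i)⟩
  calc φ (σ (σ^[i] (σ a))) = φ (σ^[i + 1] (σ a)) := by rw [Function.iterate_succ_apply']
    _ ≤ φ (σ^[j] (σ a)) := hmono hlt
    _ = φ (σ^[i] (σ a)) := by rw [heq]

def DiscreteConvex (g : ℤ → ℝ) : Prop :=
  ∀ t, 2 * g t ≤ g (t - 1) + g (t + 1)

theorem DiscreteConvex.monotone_fwdDiff {g : ℤ → ℝ} (hg : DiscreteConvex g) :
    Monotone (fwdDiff 1 g) :=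
  monotone_int_of_le_succ fun t => by
    have := hg (t + 1)
    simp only [fwdDiff, add_sub_cancel_right] at this ⊢
    linarith

section Exchange

variable {ι : Type*} [DecidableEq ι]

def IsMConvexSet (B : Set (ι → ℤ)) : Prop :=
  ∀ x ∈ B, ∀ y ∈ B, ∀ u, y u < x u → ∃ v, x v < y v ∧ x - Pi.single u 1 + Pi.single v 1 ∈ B

def exchange (z : ι → ℤ) (a b : ι) : ι → ℤ := z - Pi.single a 1 + Pi.single b 1

theorem exchange_apply (z : ι → ℤ) (a b j : ι) :
    exchange z a b j = z j - (if j = a then 1 else 0) + (if j = b then 1 else 0) := by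
  simp [exchange, Pi.single_apply]

theorem lt_of_lt_exchange_apply {x y : ι → ℤ} {b c v : ι} (hc : y c < x c)
    (hv : x v < exchange y b c v) : x v < y v := by
  rw [exchange_apply] at hv
  split_ifs at hv <;> subst_vars <;> omega

variable [Fintype ι]

def separableSum (f : ι → ℤ → ℝ) (z : ι → ℤ) : ℝ := ∑ j, f j (z j)

theorem separableSum_exchange (f : ι → ℤ → ℝ) (z : ι → ℤ) {a b : ι} (hab : a ≠ b) :
    separableSum f (exchange z a b)
      = separableSum f z - fwdDiff 1 (f a) (z a - 1) + fwdDiff 1 (f b) (z b) := by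
  have hdiff : ∑ j, (f j (exchange z a b j) - f j (z j))
      = -fwdDiff 1 (f a) (z a - 1) + fwdDiff 1 (f b) (z b) := by
    rw [Fintype.sum_eq_add a b hab]
    · simp [exchange_apply, hab, hab.symm, fwdDiff]
    · rintro j ⟨hja, hjb⟩
      simp [exchange_apply, hja, hjb]
  rw [Finset.sum_sub_distrib] at hdiff
  unfold separableSum
  linarith

theorem separableSum_exchange_eq_iff (f : ι → ℤ → ℝ) (z : ι → ℤ) {a b : ι} (hab : a ≠ b) :
    separableSum f (exchange z a b) = separableSum f z ↔
      fwdDiff 1 (f a) (z a - 1) = fwdDiff 1 (f b) (z b) := by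
  rw [separableSum_exchange f z hab]
  constructor <;> intro h <;> linarith

theorem IsMinOn.fwdDiff_le_of_exchange_mem {B : Set (ι → ℤ)} {f : ι → ℤ → ℝ} {z : ι → ℤ}
    (hz : IsMinOn (separableSum f) B z) {a b : ι} (hab : a ≠ b) (hmem : exchange z a b ∈ B) :
    fwdDiff 1 (f a) (z a - 1) ≤ fwdDiff 1 (f b) (z b) := by
  have := isMinOn_iff.mp hz _ hmem
  rw [separableSum_exchange f z hab] at this
  linarith

theorem sum_natAbs_sub_exchange_lt {x y : ι → ℤ} {b c : ι} (hb : x b < y b) (hc : y c < x c) :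
    ∑ j, (x j - exchange y b c j).natAbs < ∑ j, (x j - y j).natAbs := by
  refine Finset.sum_lt_sum (fun j _ => ?_) ⟨b, Finset.mem_univ b, ?_⟩ <;>
    simp only [exchange_apply] <;> split_ifs <;> subst_vars <;> omega

section ExchangePair

variable {B : Set (ι → ℤ)} {f : ι → ℤ → ℝ} {x y : ι → ℤ} {c b c' : ι}

theorem fwdDiff_chain_of_exchange_pair (hf : ∀ j, DiscreteConvex (f j))
    (hxmin : IsMinOn (separableSum f) B x) (hymin : IsMinOn (separableSum f) B y)
    (hc : y c < x c) (hb : x b < y b) (hc' : y c' < x c')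
    (hxb : exchange x c b ∈ B) (hyc' : exchange y b c' ∈ B) :
    fwdDiff 1 (f c) (x c - 1) ≤ fwdDiff 1 (f b) (x b) ∧
      fwdDiff 1 (f b) (x b) ≤ fwdDiff 1 (f b) (y b - 1) ∧
      fwdDiff 1 (f b) (y b - 1) ≤ fwdDiff 1 (f c') (y c') ∧
      fwdDiff 1 (f c') (y c') ≤ fwdDiff 1 (f c') (x c' - 1) :=
  ⟨hxmin.fwdDiff_le_of_exchange_mem (by rintro rfl; exact lt_asymm hc hb) hxb,
    (hf b).monotone_fwdDiff (by omega),
    hymin.fwdDiff_le_of_exchange_mem (by rintro rfl; exact lt_asymm hc' hb) hyc',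
    (hf c').monotone_fwdDiff (by omega)⟩

theorem fwdDiff_le_of_exchange_pair (hf : ∀ j, DiscreteConvex (f j))
    (hxmin : IsMinOn (separableSum f) B x) (hymin : IsMinOn (separableSum f) B y)
    (hc : y c < x c) (hb : x b < y b) (hc' : y c' < x c')
    (hxb : exchange x c b ∈ B) (hyc' : exchange y b c' ∈ B) :
    fwdDiff 1 (f c) (x c - 1) ≤ fwdDiff 1 (f c') (x c' - 1) := by
  obtain ⟨h₁, h₂, h₃, h₄⟩ := fwdDiff_chain_of_exchange_pair hf hxmin hymin hc hb hc' hxb hyc'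
  linarith

theorem separableSum_exchange_pair_eq (hf : ∀ j, DiscreteConvex (f j))
    (hxmin : IsMinOn (separableSum f) B x) (hymin : IsMinOn (separableSum f) B y)
    (hc : y c < x c) (hb : x b < y b) (hc' : y c' < x c')
    (hxb : exchange x c b ∈ B) (hyc' : exchange y b c' ∈ B)
    (hle : fwdDiff 1 (f c') (x c' - 1) ≤ fwdDiff 1 (f c) (x c - 1)) :
    separableSum f (exchange x c b) = separableSum f x ∧
      separableSum f (exchange y b c') = separableSum f y := by
  obtain ⟨h₁, h₂, h₃, h₄⟩ := fwdDiff_chain_of_exchange_pair hf hxmin hymin hc hb hc' hxb hyc'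
  rw [separableSum_exchange_eq_iff f x (by rintro rfl; exact lt_asymm hc hb),
    separableSum_exchange_eq_iff f y (by rintro rfl; exact lt_asymm hc' hb)]
  constructor <;> linarith

end ExchangePair

theorem exists_exchange_eq_of_isMinOn {B : Set (ι → ℤ)} (hB : IsMConvexSet B)
    {f : ι → ℤ → ℝ} (hf : ∀ j, DiscreteConvex (f j)) {x y : ι → ℤ} (hx : x ∈ B) (hy : y ∈ B)
    (hxmin : IsMinOn (separableSum f) B x) (hymin : IsMinOn (separableSum f) B y)
    {u : ι} (hu : y u < x u) :
    ∃ v, x v < y v ∧ exchange x u v ∈ B ∧ separableSum f (exchange x u v) = separableSum f x := by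
  have step (c : {c // y c < x c}) :
      ∃ b, x b < y b ∧ exchange x c b ∈ B ∧ ∃ c' : {c // y c < x c}, exchange y b c' ∈ B := by
    obtain ⟨b, hb, hxb⟩ := hB x hx y hy c c.2
    obtain ⟨c', hc', hyc'⟩ := hB y hy x hx b hb
    exact ⟨b, hb, hxb, ⟨c', hc'⟩, hyc'⟩
  choose β hβ hxβ σ hyσ using step
  let φ (c : {c // y c < x c}) : ℝ := fwdDiff 1 (f c) (x c - 1)
  have hφσ c : φ c ≤ φ (σ c) :=
    fwdDiff_le_of_exchange_pair hf hxmin hymin c.2 (hβ c) (σ c).2 (hxβ c) (hyσ c)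
  let u₀ : {c // y c < x c} := ⟨u, hu⟩
  obtain htight | hlt := (hφσ u₀).eq_or_lt
  · exact ⟨β u₀, hβ u₀, hxβ u₀, (separableSum_exchange_pair_eq hf hxmin hymin hu (hβ u₀)
      (σ u₀).2 (hxβ u₀) (hyσ u₀) htight.ge).1⟩
  obtain ⟨c, hcσ, hc⟩ := Function.exists_apply_eq_of_le_apply σ φ hφσ u₀
  have hy'min : IsMinOn (separableSum f) B (exchange y (β c) (σ c)) := by
    have hsum := (separableSum_exchange_pair_eq hf hxmin hymin c.2 (hβ c) (σ c).2 (hxβ c)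
      (hyσ c) hcσ.le).2
    exact isMinOn_iff.mpr fun z hz => hsum ▸ isMinOn_iff.mp hymin z hz
  have hu' : exchange y (β c) (σ c) u < x u := by
    have hσu : (σ c : ι) ≠ u := fun h => by
      have : φ (σ c) = φ u₀ := congrArg φ (Subtype.ext h)
      linarith
    rw [exchange_apply, if_neg (fun h : u = β c => lt_asymm hu (h ▸ hβ c)), if_neg hσu.symm]
    omega
  have hdist := sum_natAbs_sub_exchange_lt (hβ c) (σ c).2
  obtain ⟨v, hv, hxv, hv_eq⟩ := exists_exchange_eq_of_isMinOn hB hf hx (hyσ c) hxmin hy'min hu'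
  exact ⟨v, lt_of_lt_exchange_apply (σ c).2 hv, hxv, hv_eq⟩
termination_by ∑ j, (x j - y j).natAbs
decreasing_by exact hdist

end Exchange

theorem exchange_between_minimizers_general {K : ℕ}
    (B : Set (Fin K → ℤ))
    (hex : ∀ x ∈ B, ∀ y ∈ B, ∀ u : Fin K, y u < x u →
      ∃ v : Fin K, x v < y v ∧ x - Pi.single u 1 + Pi.single v 1 ∈ B)
    (f : Fin K → ℤ → ℝ)
    (hconv : ∀ j : Fin K, ∀ t : ℤ, 2 * f j t ≤ f j (t - 1) + f j (t + 1))
    (x y : Fin K → ℤ) (hx : x ∈ B) (hy : y ∈ B)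
    (hxmin : ∀ z ∈ B, ∑ j, f j (x j) ≤ ∑ j, f j (z j))
    (hymin : ∀ z ∈ B, ∑ j, f j (y j) ≤ ∑ j, f j (z j))
    (u : Fin K) (hu : y u < x u) :
    ∃ v : Fin K, x v < y v ∧ x - Pi.single u 1 + Pi.single v 1 ∈ B ∧
      (∑ j, f j ((x - Pi.single u 1 + Pi.single v 1 : Fin K → ℤ) j)) = ∑ j, f j (x j) :=
  exists_exchange_eq_of_isMinOn hex hconv hx hy (isMinOn_iff.mpr hxmin) (isMinOn_iff.mpr hymin) hu

/-- Any single exchange between two global minimizers that stays in the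
M-convex set is itself a global minimizer. -/
theorem exchange_between_minimizers {K : ℕ} (hK : 0 < K)
    (B : Set (Fin K → ℤ)) (hne : B.Nonempty)
    (hex : ∀ x ∈ B, ∀ y ∈ B, ∀ u : Fin K, y u < x u →
      ∃ v : Fin K, x v < y v ∧ x - Pi.single u 1 + Pi.single v 1 ∈ B)
    (f : Fin K → ℤ → ℝ)
    (hconv : ∀ j : Fin K, ∀ t : ℤ, 2 * f j t ≤ f j (t - 1) + f j (t + 1))
    (x y : Fin K → ℤ) (hx : x ∈ B) (hy : y ∈ B)
    (hxmin : ∀ z ∈ B, ∑ j, f j (x j) ≤ ∑ j, f j (z j))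
    (hymin : ∀ z ∈ B, ∑ j, f j (y j) ≤ ∑ j, f j (z j))
    (u : Fin K) (hu : y u < x u) :
    ∃ v : Fin K, x v < y v ∧ x - Pi.single u 1 + Pi.single v 1 ∈ B ∧
      (∑ j, f j ((x - Pi.single u 1 + Pi.single v 1 : Fin K → ℤ) j)) = ∑ j, f j (x j) :=
  exchange_between_minimizers_general B hex f hconv x y hx hy hxmin hymin u hu
end
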